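/- Let 0 < T* < 1, γ₃ ∈ (0,1), n ∈ ℕ with n ≥ 1, γ₄ ∈ (0,γ₃), and let f ∈ C^{γ₄}([0,T*]) with f(0) ≠ 0. Let λ, ε₅* ∈ (0,1), ε* ∈ (0, 1−λ^{ε₅*}), and set t₃* = min{T*, (2n)^{−1/γ₃}, [C₆*/(1 + n C₆*)]^{1/γ₄}} with C₆* = Γ(1+x*)|f(0)| ε* / (3 Γ(γ₄) [⟨f⟩^{(γ₄)}_{[0,T*]} + n|f(0)|]). Then for every t ∈ [0, t₃*], |𝒢_f(t)| ≥ (n|f(0)|/Γ(1+γ₃)) · (1 − ε*/3). -/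

import Mathlib

open Set MeasureTheory

/-- Hölder seminorm `⟨f⟩^{(α)}_{[0,T]}` of `f` on `[0,T]`. -/
noncomputable def holderSemi (f : ℝ → ℝ) (T α : ℝ) : ℝ :=
  sSup {y : ℝ | ∃ s t : ℝ, 0 ≤ s ∧ s < t ∧ t ≤ T ∧ y = |f t - f s| / (t - s) ^ α}

/-- The minimum value of the Euler Gamma function on `(0, ∞)`, i.e. `Γ(1 + x*)`. -/
noncomputable def GammaMin : ℝ := sInf (Real.Gamma '' Set.Ioi (0 : ℝ))

/-- Two-parametric Mittag-Leffler function `E_{a,b}(z) = Σ_{k} z^k / Γ(a k + b)`. -/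
noncomputable def mittagLeffler (a b z : ℝ) : ℝ :=
  ∑' k : ℕ, z ^ k / Real.Gamma (a * k + b)

/-- `𝒢_f(t) = ∫₀¹ (1-z)^{γ₃-1} n E_{γ₃,γ₃}(-n t^{γ₃} (1-z)^{γ₃}) f(zt) dz`. -/
noncomputable def Gcal (γ₃ : ℝ) (n : ℕ) (f : ℝ → ℝ) (t : ℝ) : ℝ :=
  ∫ z in (0:ℝ)..1, (1 - z) ^ (γ₃ - 1) * (n : ℝ) *
    mittagLeffler γ₃ γ₃ (-((n : ℝ) * t ^ γ₃ * (1 - z) ^ γ₃)) * f (z * t)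

/-
For `|w| ≤ x < 1` the series `E_{γ,γ}(w)` is dominated by the geometric series `Σ xᵏ / Γ(1 + x*)`,
so it is bounded by `1 / ((1 - x) Γ(1 + x*))` and differs from its first term `1 / Γ(γ)` by at most
`|w| / ((1 - x) Γ(1 + x*))`. Splitting `E f(zt) - f(0)/Γ(γ) = (E - 1/Γ(γ)) f(0) + E (f(zt) - f(0))`
and using `|f(zt) - f(0)| ≤ ⟨f⟩ t^{γ₄}`, the integrand of `𝒢_f(t)` is the kernel `(1 - z)^{γ₃-1}`,
of integral `1/γ₃`, times a function within `n δ` of `n f(0) / Γ(γ₃)`. Hence `𝒢_f(t)` lies within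
`n δ / γ₃` of `n f(0) / Γ(1 + γ₃)`, and the choice of `t₃*` (with `n t^{γ₃} ≤ n t^{γ₄}`) makes
`δ ≤ |f(0)| ε* / (3 Γ(γ₄)) ≤ |f(0)| ε* / (3 Γ(γ₃))`, as `Γ` decreases on `(0, 1]`.
-/

open intervalIntegral

lemma half_le_Gamma {s : ℝ} (hs : 0 < s) : 1 / 2 ≤ Real.Gamma s := by
  have hmono := Real.Gamma_strictMonoOn_Ici.monotoneOn
  rcases le_or_gt s 1 with hs1 | hs1
  · have := Real.Gamma_strictAntiOn_Ioc.antitoneOn ⟨hs, hs1⟩ ⟨one_pos, le_rfl⟩ hs1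
    linarith [Real.Gamma_one]
  rcases le_or_gt 2 s with hs2 | hs2
  · have := hmono (mem_Ici.2 le_rfl) (mem_Ici.2 hs2) hs2
    linarith [Real.Gamma_two]
  have hs3 := hmono (mem_Ici.2 le_rfl) (mem_Ici.2 (by linarith : (2 : ℝ) ≤ s + 1)) (by linarith)
  rw [Real.Gamma_two, Real.Gamma_add_one hs.ne'] at hs3
  nlinarith [Real.Gamma_pos_of_pos hs]

lemma GammaMin_le_Gamma {s : ℝ} (hs : 0 < s) : GammaMin ≤ Real.Gamma s :=
  csInf_le ⟨0, fun _ ⟨_, hx, hxy⟩ => hxy ▸ (Real.Gamma_pos_of_pos hx).le⟩ ⟨s, hs, rfl⟩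

lemma GammaMin_pos : 0 < GammaMin := by
  have : 1 / 2 ≤ GammaMin :=
    le_csInf ⟨_, 1, mem_Ioi.2 one_pos, rfl⟩ fun _ ⟨_, hx, hxy⟩ => hxy ▸ half_le_Gamma hx
  linarith

section MittagLeffler

variable {a b : ℝ}

lemma abs_mittagLeffler_term_le (ha : 0 ≤ a) (hb : 0 < b) (z : ℝ) (k : ℕ) :
    |z ^ k / Real.Gamma (a * k + b)| ≤ |z| ^ k / GammaMin := by
  have hpos : 0 < a * k + b := by positivity
  rw [abs_div, abs_pow, abs_of_pos (Real.Gamma_pos_of_pos hpos)]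
  exact div_le_div_of_nonneg_left (by positivity) GammaMin_pos (GammaMin_le_Gamma hpos)

lemma norm_mittagLeffler_term_le_of_abs_le (ha : 0 ≤ a) (hb : 0 < b) {z x : ℝ} (hz : |z| ≤ x)
    (k : ℕ) : ‖z ^ k / Real.Gamma (a * k + b)‖ ≤ x ^ k / GammaMin :=
  (abs_mittagLeffler_term_le ha hb z k).trans <|
    div_le_div_of_nonneg_right (pow_le_pow_left₀ (abs_nonneg z) hz k) GammaMin_pos.le

lemma abs_mittagLeffler_le (ha : 0 ≤ a) (hb : 0 < b) {z x : ℝ} (hz : |z| ≤ x) (hx : x < 1) :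
    |mittagLeffler a b z| ≤ 1 / ((1 - x) * GammaMin) := by
  have hsum := (hasSum_geometric_of_lt_one ((abs_nonneg z).trans hz) hx).div_const GammaMin
  rw [← one_div, div_div] at hsum
  exact tsum_of_norm_bounded (f := fun k : ℕ => z ^ k / Real.Gamma (a * k + b)) hsum
    (norm_mittagLeffler_term_le_of_abs_le ha hb hz)

lemma abs_mittagLeffler_sub_le (ha : 0 ≤ a) (hb : 0 < b) {z x : ℝ} (hz : |z| ≤ x) (hx : x < 1) :
    |mittagLeffler a b z - 1 / Real.Gamma b| ≤ |z| / ((1 - x) * GammaMin) := by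
  have hx0 : 0 ≤ x := (abs_nonneg z).trans hz
  have hsummable : Summable fun k : ℕ => z ^ k / Real.Gamma (a * k + b) :=
    Summable.of_norm_bounded ((summable_geometric_of_lt_one hx0 hx).div_const _)
      (norm_mittagLeffler_term_le_of_abs_le ha hb hz)
  have htail : mittagLeffler a b z - 1 / Real.Gamma b =
      ∑' k : ℕ, z ^ (k + 1) / Real.Gamma (a * ↑(k + 1) + b) := by
    rw [mittagLeffler, hsummable.tsum_eq_zero_add]
    simp
  have hsum := ((hasSum_geometric_of_lt_one hx0 hx).mul_left |z|).div_const GammaMin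
  rw [← div_eq_mul_inv, div_div] at hsum
  rw [htail]
  refine tsum_of_norm_bounded (f := fun k : ℕ => z ^ (k + 1) / Real.Gamma (a * ↑(k + 1) + b))
    hsum fun k => ?_
  calc ‖z ^ (k + 1) / Real.Gamma (a * ↑(k + 1) + b)‖ ≤ |z| ^ (k + 1) / GammaMin :=
        abs_mittagLeffler_term_le ha hb z (k + 1)
    _ ≤ |z| * x ^ k / GammaMin := by
        rw [pow_succ']
        exact div_le_div_of_nonneg_right (by gcongr) GammaMin_pos.le

lemma abs_mittagLeffler_mul_sub_le (ha : 0 ≤ a) (hb : 0 < b) {z x : ℝ} (hz : |z| ≤ x)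
    (hx : x < 1) (u v : ℝ) :
    |mittagLeffler a b z * v - u / Real.Gamma b| ≤ (x * |u| + |v - u|) / ((1 - x) * GammaMin) := by
  have hden : 0 < (1 - x) * GammaMin := mul_pos (by linarith) GammaMin_pos
  have hsplit : mittagLeffler a b z * v - u / Real.Gamma b =
      (mittagLeffler a b z - 1 / Real.Gamma b) * u + mittagLeffler a b z * (v - u) := by ring
  calc |mittagLeffler a b z * v - u / Real.Gamma b|
      ≤ |mittagLeffler a b z - 1 / Real.Gamma b| * |u| + |mittagLeffler a b z| * |v - u| := by
        rw [hsplit, ← abs_mul, ← abs_mul]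
        exact abs_add_le _ _
    _ ≤ |z| / ((1 - x) * GammaMin) * |u| + 1 / ((1 - x) * GammaMin) * |v - u| := by
        gcongr
        exacts [abs_mittagLeffler_sub_le ha hb hz hx, abs_mittagLeffler_le ha hb hz hx]
    _ ≤ x / ((1 - x) * GammaMin) * |u| + 1 / ((1 - x) * GammaMin) * |v - u| := by gcongr
    _ = (x * |u| + |v - u|) / ((1 - x) * GammaMin) := by ring

lemma continuousOn_mittagLeffler (ha : 0 ≤ a) (hb : 0 < b) {x : ℝ} (hx0 : 0 ≤ x) (hx : x < 1) :
    ContinuousOn (mittagLeffler a b) (Icc (-x) x) :=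
  continuousOn_tsum (fun k => (continuous_pow k).continuousOn.div_const _)
    ((summable_geometric_of_lt_one hx0 hx).div_const _)
    fun k _ hz => norm_mittagLeffler_term_le_of_abs_le ha hb (abs_le.2 hz) k

end MittagLeffler

lemma intervalIntegrable_one_sub_rpow {p : ℝ} (hp : -1 < p) :
    IntervalIntegrable (fun z : ℝ => (1 - z) ^ p) volume 0 1 := by
  simpa using ((intervalIntegrable_rpow' (a := 0) (b := 1) hp).comp_sub_left 1).symm

lemma integral_one_sub_rpow {p : ℝ} (hp : -1 < p) :
    ∫ z in (0 : ℝ)..1, (1 - z) ^ p = 1 / (p + 1) := by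
  rw [integral_comp_sub_left (fun z : ℝ => z ^ p) 1]
  simp [integral_rpow (Or.inl hp), Real.zero_rpow (by linarith : p + 1 ≠ 0)]

lemma abs_integral_one_sub_rpow_mul_sub_le {γ c δ : ℝ} {g : ℝ → ℝ} (hγ : 0 < γ)
    (hg : ContinuousOn g (Icc 0 1)) (hgc : ∀ z ∈ Icc (0 : ℝ) 1, |g z - c| ≤ δ) :
    |(∫ z in (0 : ℝ)..1, (1 - z) ^ (γ - 1) * g z) - c / γ| ≤ δ / γ := by
  have hk := intervalIntegrable_one_sub_rpow (p := γ - 1) (by linarith)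
  have hkγ := integral_one_sub_rpow (p := γ - 1) (by linarith)
  rw [sub_add_cancel] at hkγ
  have hcentre : (∫ z in (0 : ℝ)..1, (1 - z) ^ (γ - 1) * g z) - c / γ =
      ∫ z in (0 : ℝ)..1, (1 - z) ^ (γ - 1) * (g z - c) := by
    simp_rw [mul_sub]
    rw [integral_sub (hk.mul_continuousOn (by rwa [uIcc_of_le zero_le_one])) (hk.mul_const c),
      intervalIntegral.integral_mul_const, hkγ, one_div_mul_eq_div]
  rw [hcentre, ← Real.norm_eq_abs]
  calc ‖∫ z in (0 : ℝ)..1, (1 - z) ^ (γ - 1) * (g z - c)‖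
      ≤ ∫ z in (0 : ℝ)..1, (1 - z) ^ (γ - 1) * δ := by
        refine norm_integral_le_of_norm_le zero_le_one (ae_of_all _ fun z hz => ?_)
          (hk.mul_const δ)
        rw [norm_mul, Real.norm_of_nonneg (Real.rpow_nonneg (by linarith [hz.2]) _)]
        exact mul_le_mul_of_nonneg_left (hgc z (Ioc_subset_Icc_self hz))
          (Real.rpow_nonneg (by linarith [hz.2]) _)
    _ = δ / γ := by rw [intervalIntegral.integral_mul_const, hkγ, one_div_mul_eq_div]

lemma mul_mem_Icc_of_mem_Icc {z t : ℝ} (ht : 0 ≤ t) (hz : z ∈ Icc (0 : ℝ) 1) :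
    z * t ∈ Icc 0 t :=
  ⟨mul_nonneg hz.1 ht, mul_le_of_le_one_left ht hz.2⟩

lemma abs_Gcal_sub_le {γ t x η : ℝ} {n : ℕ} {f : ℝ → ℝ} (hγ : 0 < γ) (ht : 0 ≤ t)
    (hxt : n * t ^ γ ≤ x) (hx : x < 1) (hf : ContinuousOn f (Icc 0 t))
    (hη : ∀ s ∈ Icc 0 t, |f s - f 0| ≤ η) :
    |Gcal γ n f t - n * f 0 / Real.Gamma (1 + γ)| ≤
      n * ((x * |f 0| + η) / ((1 - x) * GammaMin)) / γ := by
  have hx0 : 0 ≤ x := le_trans (by positivity) hxt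
  set w : ℝ → ℝ := fun z => -(n * t ^ γ * (1 - z) ^ γ)
  have hw : ∀ z ∈ Icc (0 : ℝ) 1, |w z| ≤ x := fun z hz => by
    rw [abs_neg, abs_of_nonneg (by have := hz.2; positivity)]
    exact le_trans (mul_le_of_le_one_right (by positivity)
      (Real.rpow_le_one (by linarith [hz.2]) (by linarith [hz.1]) hγ.le)) hxt
  have hGcal : Gcal γ n f t =
      ∫ z in (0 : ℝ)..1, (1 - z) ^ (γ - 1) * (n * (mittagLeffler γ γ (w z) * f (z * t))) := by
    simp only [Gcal, w, mul_assoc]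
  have hGamma : (n : ℝ) * f 0 / Real.Gamma (1 + γ) = n * (f 0 / Real.Gamma γ) / γ := by
    rw [add_comm, Real.Gamma_add_one hγ.ne']
    field_simp
  rw [hGcal, hGamma]
  refine abs_integral_one_sub_rpow_mul_sub_le hγ ?_ fun z hz => ?_
  · refine continuousOn_const.mul <| ContinuousOn.mul
      ((continuousOn_mittagLeffler hγ.le hγ hx0 hx).comp ?_ fun z hz => abs_le.1 (hw z hz))
      (hf.comp (by fun_prop) fun z hz => mul_mem_Icc_of_mem_Icc ht hz)
    have hpow : Continuous fun z : ℝ => (1 - z) ^ γ :=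
      (Real.continuous_rpow_const hγ.le).comp (continuous_const.sub continuous_id)
    exact (continuous_const.mul hpow).neg.continuousOn
  · rw [← mul_sub, abs_mul, Nat.abs_cast]
    gcongr
    refine (abs_mittagLeffler_mul_sub_le hγ.le hγ (hw z hz) hx _ _).trans ?_
    gcongr
    · exact (mul_pos (by linarith) GammaMin_pos).le
    · exact hη _ (mul_mem_Icc_of_mem_Icc ht hz)

lemma mul_one_sub_le_abs_Gcal {γ t x η ε : ℝ} {n : ℕ} {f : ℝ → ℝ} (hγ : 0 < γ) (ht : 0 ≤ t)
    (hxt : n * t ^ γ ≤ x) (hx : x < 1) (hf : ContinuousOn f (Icc 0 t))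
    (hη : ∀ s ∈ Icc 0 t, |f s - f 0| ≤ η)
    (hδ : (x * |f 0| + η) / ((1 - x) * GammaMin) ≤ |f 0| * ε / (3 * Real.Gamma γ)) :
    n * |f 0| / Real.Gamma (1 + γ) * (1 - ε / 3) ≤ |Gcal γ n f t| := by
  have hΓ : Real.Gamma (1 + γ) = γ * Real.Gamma γ := by
    rw [add_comm, Real.Gamma_add_one hγ.ne']
  have hΓpos := Real.Gamma_pos_of_pos hγ
  calc n * |f 0| / Real.Gamma (1 + γ) * (1 - ε / 3)
      = |n * f 0 / Real.Gamma (1 + γ)| - n * (|f 0| * ε / (3 * Real.Gamma γ)) / γ := by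
        rw [abs_div, abs_mul, Nat.abs_cast, hΓ, abs_of_pos (mul_pos hγ hΓpos)]
        field_simp
    _ ≤ |n * f 0 / Real.Gamma (1 + γ)| - n * ((x * |f 0| + η) / ((1 - x) * GammaMin)) / γ := by
        gcongr
    _ ≤ |Gcal γ n f t| := by
        linarith [abs_Gcal_sub_le hγ ht hxt hx hf hη,
          abs_sub_abs_le_abs_sub (n * f 0 / Real.Gamma (1 + γ)) (Gcal γ n f t),
          abs_sub_comm (n * f 0 / Real.Gamma (1 + γ)) (Gcal γ n f t)]

lemma mul_lt_one_and_div_one_sub_mul_le {n τ C : ℝ} (hn : 0 ≤ n) (hC : 0 ≤ C)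
    (hτ : τ ≤ C / (1 + n * C)) : n * τ < 1 ∧ τ / (1 - n * τ) ≤ C := by
  have hnC : 0 < 1 + n * C := by positivity
  have hnτ : n * τ < 1 := calc
    n * τ ≤ n * (C / (1 + n * C)) := mul_le_mul_of_nonneg_left hτ hn
    _ < 1 := by rw [← mul_div_assoc, div_lt_one hnC]; linarith
  have hτC : τ * (1 + n * C) ≤ C := (le_div_iff₀ hnC).1 hτ
  exact ⟨hnτ, (div_le_iff₀ (by linarith)).2 (by linarith)⟩

lemma mul_lt_one_and_error_le {n H a ε Γ G τ : ℝ} (hn : 0 ≤ n) (hH : 0 ≤ H) (ha : 0 ≤ a)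
    (hε : 0 ≤ ε) (hΓ : 0 < Γ) (hG : 0 < G)
    (hτ : τ ≤ G * a * ε / (3 * Γ * (H + n * a)) / (1 + n * (G * a * ε / (3 * Γ * (H + n * a))))) :
    n * τ < 1 ∧ (n * τ * a + H * τ) / ((1 - n * τ) * G) ≤ a * ε / (3 * Γ) := by
  set C := G * a * ε / (3 * Γ * (H + n * a))
  obtain ⟨hnτ, hτC⟩ := mul_lt_one_and_div_one_sub_mul_le hn (by positivity) hτ
  refine ⟨hnτ, ?_⟩
  calc (n * τ * a + H * τ) / ((1 - n * τ) * G) = τ / (1 - n * τ) * (H + n * a) / G := by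
        rw [← div_div]; ring
    _ ≤ C * (H + n * a) / G := by gcongr
    _ = a * ε / (3 * Γ) * ((H + n * a) / (H + n * a)) := by
        simp only [C]
        field_simp
    _ ≤ a * ε / (3 * Γ) := mul_le_of_le_one_right (by positivity) (div_self_le_one _)

lemma holderSemi_nonneg (f : ℝ → ℝ) (T α : ℝ) : 0 ≤ holderSemi f T α :=
  Real.sSup_nonneg fun _ ⟨_, _, _, hst, _, hy⟩ =>
    hy ▸ div_nonneg (abs_nonneg _) (Real.rpow_nonneg (sub_nonneg.2 hst.le) _)

theorem stmt_9_general (Ts γ₃ γ₄ : ℝ) (n : ℕ) (f : ℝ → ℝ)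
    (hTs : 0 < Ts ∧ Ts < 1) (hγ₃ : γ₃ ∈ Set.Ioo (0:ℝ) 1)
    (hγ₄ : γ₄ ∈ Set.Ioo (0:ℝ) γ₃)
    (hfc : ContinuousOn f (Set.Icc 0 Ts))
    (hfh : ∀ s t : ℝ, 0 ≤ s → s ≤ t → t ≤ Ts →
      |f t - f s| ≤ holderSemi f Ts γ₄ * (t - s) ^ γ₄)
    (lam ε₅ εs : ℝ)
    (hεs : εs ∈ Set.Ioo (0:ℝ) (1 - lam ^ ε₅)) :
    ∀ t ∈ Set.Icc (0:ℝ)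
      (min Ts (min ((2 * (n : ℝ)) ^ (-(1 / γ₃)))
        ((GammaMin * |f 0| * εs /
              (3 * Real.Gamma γ₄ * (holderSemi f Ts γ₄ + (n : ℝ) * |f 0|)) /
            (1 + (n : ℝ) * (GammaMin * |f 0| * εs /
              (3 * Real.Gamma γ₄ * (holderSemi f Ts γ₄ + (n : ℝ) * |f 0|))))) ^
          (1 / γ₄)))),
      (n : ℝ) * |f 0| / Real.Gamma (1 + γ₃) * (1 - εs / 3) ≤ |Gcal γ₃ n f t| := by
  rintro t ⟨ht0, ht⟩
  have hH := holderSemi_nonneg f Ts γ₄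
  have hΓ₄ := Real.Gamma_pos_of_pos hγ₄.1
  have hεs₀ := hεs.1
  have hG := GammaMin_pos
  have htTs : t ≤ Ts := ht.trans (min_le_left _ _)
  have htτ := ht.trans ((min_le_right _ _).trans (min_le_right _ _))
  rw [one_div, Real.le_rpow_inv_iff_of_pos ht0 (by positivity) hγ₄.1] at htτ
  obtain ⟨hnτ, herror⟩ :=
    mul_lt_one_and_error_le n.cast_nonneg hH (abs_nonneg _) hεs₀.le hΓ₄ hG htτ
  have hx : n * t ^ γ₃ ≤ n * t ^ γ₄ := mul_le_mul_of_nonneg_left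
    (Real.rpow_le_rpow_of_exponent_ge' ht0 (htTs.trans hTs.2.le) hγ₄.1.le hγ₄.2.le) n.cast_nonneg
  have hη (s : ℝ) (hs : s ∈ Icc 0 t) : |f s - f 0| ≤ holderSemi f Ts γ₄ * t ^ γ₄ := by
    have := hfh 0 s le_rfl hs.1 (hs.2.trans htTs)
    rw [sub_zero] at this
    exact this.trans (mul_le_mul_of_nonneg_left (Real.rpow_le_rpow hs.1 hs.2 hγ₄.1.le) hH)
  have hΓ : Real.Gamma γ₃ ≤ Real.Gamma γ₄ := Real.Gamma_strictAntiOn_Ioc.antitoneOn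
    ⟨hγ₄.1, hγ₄.2.le.trans hγ₃.2.le⟩ ⟨hγ₃.1, hγ₃.2.le⟩ hγ₄.2.le
  refine mul_one_sub_le_abs_Gcal hγ₃.1 ht0 hx hnτ (hfc.mono (Icc_subset_Icc_right htTs)) hη
    (herror.trans ?_)
  gcongr
  exact mul_pos three_pos (Real.Gamma_pos_of_pos hγ₃.1)

theorem stmt_9 (Ts γ₃ γ₄ : ℝ) (n : ℕ) (f : ℝ → ℝ)
    (hTs : 0 < Ts ∧ Ts < 1) (hγ₃ : γ₃ ∈ Set.Ioo (0:ℝ) 1)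
    (hn : 1 ≤ n) (hγ₄ : γ₄ ∈ Set.Ioo (0:ℝ) γ₃)
    (hfc : ContinuousOn f (Set.Icc 0 Ts))
    (hfh : ∀ s t : ℝ, 0 ≤ s → s ≤ t → t ≤ Ts →
      |f t - f s| ≤ holderSemi f Ts γ₄ * (t - s) ^ γ₄)
    (hf0 : f 0 ≠ 0)
    (lam ε₅ εs : ℝ) (hlam : lam ∈ Set.Ioo (0:ℝ) 1) (hε₅ : ε₅ ∈ Set.Ioo (0:ℝ) 1)
    (hεs : εs ∈ Set.Ioo (0:ℝ) (1 - lam ^ ε₅)) :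
    ∀ t ∈ Set.Icc (0:ℝ)
      (min Ts (min ((2 * (n : ℝ)) ^ (-(1 / γ₃)))
        ((GammaMin * |f 0| * εs /
              (3 * Real.Gamma γ₄ * (holderSemi f Ts γ₄ + (n : ℝ) * |f 0|)) /
            (1 + (n : ℝ) * (GammaMin * |f 0| * εs /
              (3 * Real.Gamma γ₄ * (holderSemi f Ts γ₄ + (n : ℝ) * |f 0|))))) ^
          (1 / γ₄)))),
      (n : ℝ) * |f 0| / Real.Gamma (1 + γ₃) * (1 - εs / 3) ≤ |Gcal γ₃ n f t| :=
  stmt_9_general Ts γ₃ γ₄ n f hTs hγ₃ hγ₄ hfc hfh lam ε₅ εs hεs
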